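/- arXiv:1802.08445 — 2 statements merged into one kernel-verified Lean document; each statement's English description precedes it below -/
import Mathlib

section
/- Let F = ⟨A, R, W, S⟩ be a semiring-based weighted argumentation framework over an absorptive c-semiring S, let Z ⊆ A be w-conflict-free, and fix z ∈ Z. Define the reduced WAF F' on A' = {z} ∪ (A \ Z) by W'(z, j) = ⊗_{i ∈ Z} W(i, j) and W'(j, z) = ⊗_{i ∈ Z} W(j, i) for j ∈ A \ Z, W'(j, j') = W(j, j') for j, j' ∈ A \ Z, and W'(z, z) = ⊤. Then Z is a w-stable extension of F if and only if {z} is a w-stable extension of F'. -/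
/-!
Over an absorptive c-semiring `⊤ = 1` is the greatest element and a product lies below each of
its factors, so a product equals `⊤` iff every factor does. Hence a w-conflict-free set `B` is
w-stable iff every argument `a` outside it has `W(B, a) ≠ ⊤` and, when `W(a, B) ≠ ⊤`,
`W(B, a) ≤ₛ W(a, B)`. This sees `B` only through the products `W(B, a)` and `W(a, B)`, which are
exactly the weights `W'(z, a)` and `W'(a, z)` of the contracted framework.
-/

open Finset

variable {A : Type*} [Fintype A] [DecidableEq A] {S : Type*} [CommSemiring S]

/-- The order induced by the idempotent addition of a c-semiring: `a ≤ₛ b` iff `a + b = b`. -/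
def sLE (a b : S) : Prop := a + b = b

/-- The attack weight `W(B, D)` from a set of arguments `B` to a set `D`:
the semiring product of all pairwise weights. -/
def Wsets (W : A → A → S) (B D : Finset A) : S := ∏ b ∈ B, ∏ d ∈ D, W b d

/-- `B` is w-conflict-free iff `W(B, B) = ⊤` (here `⊤` is the multiplicative unit `1`). -/
def wConflictFree (W : A → A → S) (B : Finset A) : Prop := Wsets W B B = 1

/-- Within the framework whose set of arguments is `U`, the set `B` w-defends `b`:
for every attacker `a ∈ U` of `b` (i.e. `W a b ≠ ⊤`), `W(a, B ∪ {b}) ≥ₛ W(B, a)`. -/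
def wDefendsIn (W : A → A → S) (U B : Finset A) (b : A) : Prop :=
  ∀ a ∈ U, W a b ≠ 1 → sLE (Wsets W B {a}) (Wsets W {a} (insert b B))

/-- `B` is w-admissible in the framework with argument set `U`:
`B ⊆ U`, `B` is w-conflict-free, and `B` w-defends each of its members. -/
def wAdmissibleIn (W : A → A → S) (U B : Finset A) : Prop :=
  B ⊆ U ∧ wConflictFree W B ∧ ∀ b ∈ B, wDefendsIn W U B b

/-- `B` is a w-stable extension: w-admissible and every argument of `U` outside `B`
is attacked by some member of `B`. -/
def wStableIn (W : A → A → S) (U B : Finset A) : Prop :=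
  wAdmissibleIn W U B ∧ ∀ a ∈ U, a ∉ B → ∃ b ∈ B, W b a ≠ 1

/-- `B` is a w-complete extension: w-admissible and it contains every argument `b`
such that `B ∪ {b}` is w-admissible. -/
def wCompleteIn (W : A → A → S) (U B : Finset A) : Prop :=
  wAdmissibleIn W U B ∧ ∀ b ∈ U, wAdmissibleIn W U (insert b B) → b ∈ B

/-- `B` is a w-preferred extension: a ⊆-maximal w-admissible subset. -/
def wPreferredIn (W : A → A → S) (U B : Finset A) : Prop :=
  wAdmissibleIn W U B ∧ ∀ C : Finset A, wAdmissibleIn W U C → B ⊆ C → C = B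

theorem sLE_antisymm {a b : S} (hab : sLE a b) (hba : sLE b a) : a = b :=
  hba.symm.trans ((add_comm b a).trans hab)

theorem sLE_mul_left (habs : ∀ s t : S, s + s * t = s) (a b : S) : sLE (a * b) a :=
  (add_comm _ _).trans (habs a b)

theorem eq_one_of_mul_eq_one_of_absorptive (habs : ∀ s t : S, s + s * t = s) {a b : S}
    (h : a * b = 1) : a = 1 := by
  have ha_le_one : sLE a 1 := by simpa only [one_mul] using sLE_mul_left habs 1 a
  have hone_le_a : sLE 1 a := h ▸ sLE_mul_left habs a b
  exact sLE_antisymm ha_le_one hone_le_a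

theorem prod_eq_one_iff_of_absorptive (habs : ∀ s t : S, s + s * t = s) {ι : Type*}
    {s : Finset ι} {f : ι → S} : ∏ i ∈ s, f i = 1 ↔ ∀ i ∈ s, f i = 1 := by
  classical
  refine ⟨fun h i hi => ?_, prod_eq_one⟩
  exact eq_one_of_mul_eq_one_of_absorptive habs (by rwa [mul_prod_erase s f hi])

theorem prod_ne_one_iff_of_absorptive (habs : ∀ s t : S, s + s * t = s) {ι : Type*}
    {s : Finset ι} {f : ι → S} : ∏ i ∈ s, f i ≠ 1 ↔ ∃ i ∈ s, f i ≠ 1 := by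
  simp only [ne_eq, prod_eq_one_iff_of_absorptive habs, not_forall, exists_prop]

section Framework

variable {α : Type*} (W : α → α → S)

@[simp]
theorem Wsets_singleton_left (a : α) (D : Finset α) : Wsets W {a} D = ∏ d ∈ D, W a d := by
  simp [Wsets]

@[simp]
theorem Wsets_singleton_right (B : Finset α) (a : α) : Wsets W B {a} = ∏ b ∈ B, W b a := by
  simp [Wsets]

theorem wConflictFree_iff (habs : ∀ s t : S, s + s * t = s) {B : Finset α} :
    wConflictFree W B ↔ ∀ b ∈ B, ∀ d ∈ B, W b d = 1 := by
  simp only [wConflictFree, Wsets, prod_eq_one_iff_of_absorptive habs]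

theorem forall_wDefendsIn_iff [DecidableEq α] (habs : ∀ s t : S, s + s * t = s) (U B : Finset α) :
    (∀ b ∈ B, wDefendsIn W U B b) ↔
      ∀ a ∈ U, Wsets W {a} B ≠ 1 → sLE (Wsets W B {a}) (Wsets W {a} B) := by
  simp only [wDefendsIn, Wsets_singleton_left, prod_ne_one_iff_of_absorptive habs]
  constructor
  · rintro hdef a ha ⟨b, hb, hab⟩
    simpa only [insert_eq_of_mem hb] using hdef b hb a ha hab
  · intro hdef b hb a ha hab
    simpa only [insert_eq_of_mem hb] using hdef a ha ⟨b, hb, hab⟩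

theorem wStableIn_iff_of_wConflictFree [DecidableEq α] (habs : ∀ s t : S, s + s * t = s)
    {U B : Finset α} (hBU : B ⊆ U) (hcf : wConflictFree W B) :
    wStableIn W U B ↔ ∀ a ∈ U \ B,
      Wsets W B {a} ≠ 1 ∧ (Wsets W {a} B ≠ 1 → sLE (Wsets W B {a}) (Wsets W {a} B)) := by
  have hinside : ∀ a ∈ B, Wsets W {a} B = 1 := fun a ha => by
    rw [Wsets_singleton_left, prod_eq_one_iff_of_absorptive habs]
    exact (wConflictFree_iff W habs).mp hcf a ha
  have hattacks_iff : ∀ a, Wsets W B {a} ≠ 1 ↔ ∃ b ∈ B, W b a ≠ 1 := fun a => by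
    rw [Wsets_singleton_right, prod_ne_one_iff_of_absorptive habs]
  simp only [wStableIn, wAdmissibleIn, hBU, hcf, true_and, forall_wDefendsIn_iff W habs,
    hattacks_iff, mem_sdiff, and_imp]
  constructor
  · rintro ⟨hdef, hatt⟩ a ha haB
    exact ⟨hatt a ha haB, hdef a ha⟩
  · intro h
    refine ⟨fun a ha hattB => ?_, fun a ha haB => (h a ha haB).1⟩
    by_cases haB : a ∈ B
    · exact absurd (hinside a haB) hattB
    · exact (h a ha haB).2 hattB

end Framework

theorem contraction_preserves_stable_general (W : A → A → S)
    (habs : ∀ s t : S, s + s * t = s)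
    (Z : Finset A) (hcf : wConflictFree W Z) (z : A) (hz : z ∈ Z)
    (W' : A → A → S)
    (hW'zj : ∀ j ∉ Z, W' z j = ∏ i ∈ Z, W i j)
    (hW'jz : ∀ j ∉ Z, W' j z = ∏ i ∈ Z, W j i)
    (hW'zz : W' z z = 1) :
    wStableIn W Finset.univ Z ↔
      wStableIn W' (insert z (Finset.univ \ Z)) {z} := by
  have hcf' : wConflictFree W' {z} := by simpa [wConflictFree, Wsets] using hW'zz
  have hrest : insert z (univ \ Z) \ {z} = univ \ Z := by
    rw [insert_sdiff_of_mem _ (mem_singleton_self z), sdiff_singleton_eq_erase, erase_eq_self]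
    simp [hz]
  rw [wStableIn_iff_of_wConflictFree W habs (subset_univ Z) hcf,
    wStableIn_iff_of_wConflictFree W' habs (singleton_subset_iff.2 (mem_insert_self _ _)) hcf',
    hrest]
  refine forall₂_congr fun a ha => ?_
  have haZ : a ∉ Z := (mem_sdiff.1 ha).2
  simp only [Wsets_singleton_left, Wsets_singleton_right, prod_singleton, hW'zj a haZ,
    hW'jz a haZ]

/-- Matrix reduction by contraction of a w-conflict-free set Z into a single
argument z ∈ Z: Z is a w-stable extension in F iff {z} is a w-stable extension in the reduced framework F',
whose argument set is {z} ∪ (A \ Z) and whose weights W' are obtained by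
combining the rows and columns of Z. -/
theorem contraction_preserves_stable (W : A → A → S)
    (hadd : ∀ s : S, s + s = s) (habs : ∀ s t : S, s + s * t = s)
    (Z : Finset A) (hcf : wConflictFree W Z) (z : A) (hz : z ∈ Z)
    (W' : A → A → S)
    (hW'zj : ∀ j ∉ Z, W' z j = ∏ i ∈ Z, W i j)
    (hW'jz : ∀ j ∉ Z, W' j z = ∏ i ∈ Z, W j i)
    (hW'jj : ∀ j ∉ Z, ∀ j' ∉ Z, W' j j' = W j j')
    (hW'zz : W' z z = 1) :
    wStableIn W Finset.univ Z ↔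
      wStableIn W' (insert z (Finset.univ \ Z)) {z} :=
  contraction_preserves_stable_general W habs Z hcf z hz W' hW'zj hW'jz hW'zz
end

section
/- Let F = ⟨A, R, W, S⟩ be a semiring-based weighted argumentation framework over an absorptive c-semiring S, let Z ⊆ A be a w-admissible extension of F, and let B = A \ (Z ∪ R⁺(Z)). If T ⊆ B is a w-complete extension of the restricted framework F|_B and every argument of T is w-defended by Z ∪ T in F, then Z ∪ T is a w-complete extension of F. -/
open Finset

variable {A : Type*} [Fintype A] [DecidableEq A] {S : Type*} [CommSemiring S]

/-!
In an absorptive c-semiring a product lies below each of its factors and everything lies below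
`⊤ = 1`, so a product of weights equals `⊤` only if every factor does. Hence no argument of `B`
attacks `Z`: `Z` defends itself against such an argument `a` with `W(Z, a) = ⊤`, which forces
`W(a, Z) = ⊤`. This makes `Z ∪ T` conflict-free. A member of `Z` attacked by `a` is defended by
`Z ∪ T` through the defence of `T` if `a` attacks `T`, and through that of `Z` otherwise.
Finally, if `Z ∪ T ∪ {b}` is w-admissible then `b ∈ B`, and since `Z` only contributes weight `⊤`
inside `B`, restricting to `F|_B` shows that `T ∪ {b}` is w-admissible there, so `b ∈ T`.
-/

def IsAbsorptive (S : Type*) [CommSemiring S] : Prop := ∀ s t : S, s + s * t = s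

section Order

variable {S : Type*} [CommSemiring S]

theorem sLE_trans {x y z : S} (hxy : sLE x y) (hyz : sLE y z) : sLE x z := by
  unfold sLE at *
  rw [← hyz, ← add_assoc, hxy]

theorem sLE_antisymm_s12 {x y : S} (hxy : sLE x y) (hyx : sLE y x) : x = y := by
  unfold sLE at *
  rw [← hyx, add_comm, hxy]

namespace IsAbsorptive

theorem mul_sLE (habs : IsAbsorptive S) (x y : S) : sLE (x * y) x := by
  unfold sLE
  rw [add_comm]
  exact habs x y

theorem sLE_one (habs : IsAbsorptive S) (x : S) : sLE x 1 := by
  simpa using habs.mul_sLE 1 x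

theorem eq_one_of_dvd_one (habs : IsAbsorptive S) {x : S} (h : x ∣ 1) : x = 1 := by
  obtain ⟨k, hk⟩ := h
  refine sLE_antisymm_s12 (habs.sLE_one x) ?_
  rw [hk]
  exact habs.mul_sLE x k

end IsAbsorptive

end Order

section Weights

variable {A : Type*} {S : Type*} [CommSemiring S] {W : A → A → S}

theorem Wsets_eq_one_iff (habs : IsAbsorptive S) {B D : Finset A} :
    Wsets W B D = 1 ↔ ∀ b ∈ B, ∀ d ∈ D, W b d = 1 := by
  refine ⟨fun h b hb d hd => habs.eq_one_of_dvd_one ?_,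
    fun h => prod_eq_one fun b hb => prod_eq_one (h b hb)⟩
  rw [← h]
  exact (dvd_prod_of_mem _ hd).trans (dvd_prod_of_mem (fun b => ∏ d ∈ D, W b d) hb)

theorem wConflictFree_iff_s12 (habs : IsAbsorptive S) {C : Finset A} :
    wConflictFree W C ↔ ∀ x ∈ C, ∀ y ∈ C, W x y = 1 :=
  Wsets_eq_one_iff habs

variable [DecidableEq A]

theorem Wsets_sLE_of_subset_left (habs : IsAbsorptive S) {B B' D : Finset A} (h : B ⊆ B') :
    sLE (Wsets W B' D) (Wsets W B D) := by
  unfold Wsets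
  rw [← prod_sdiff h, mul_comm]
  exact habs.mul_sLE _ _

theorem Wsets_sLE_of_subset_right (habs : IsAbsorptive S) {B D D' : Finset A} (h : D ⊆ D') :
    sLE (Wsets W B D') (Wsets W B D) := by
  unfold Wsets
  simp_rw [← prod_sdiff h, prod_mul_distrib]
  rw [mul_comm]
  exact habs.mul_sLE _ _

theorem Wsets_union_left_of_forall_eq_one {Z C D : Finset A}
    (hZ : ∀ z ∈ Z, ∀ d ∈ D, W z d = 1) : Wsets W (Z ∪ C) D = Wsets W C D :=
  (prod_subset subset_union_right fun z hz hzC =>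
    prod_eq_one (hZ z ((mem_union.1 hz).resolve_right hzC))).symm

theorem Wsets_union_right_of_forall_eq_one {B Z C : Finset A}
    (hZ : ∀ b ∈ B, ∀ z ∈ Z, W b z = 1) : Wsets W B (Z ∪ C) = Wsets W B C :=
  prod_congr rfl fun b hb => (prod_subset subset_union_right fun z hz hzC =>
    hZ b hb z ((mem_union.1 hz).resolve_right hzC)).symm

theorem wConflictFree_union (habs : IsAbsorptive S) {Z T : Finset A}
    (hZ : wConflictFree W Z) (hT : wConflictFree W T)
    (hZT : ∀ z ∈ Z, ∀ t ∈ T, W z t = 1) (hTZ : ∀ t ∈ T, ∀ z ∈ Z, W t z = 1) :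
    wConflictFree W (Z ∪ T) := by
  rw [wConflictFree_iff_s12 habs] at hZ hT ⊢
  intro x hx y hy
  rcases mem_union.1 hx with hx | hx <;> rcases mem_union.1 hy with hy | hy
  exacts [hZ x hx y hy, hZT x hx y hy, hTZ x hx y hy, hT x hx y hy]

theorem wDefendsIn_iff_of_mem {U B : Finset A} {b : A} (hb : b ∈ B) :
    wDefendsIn W U B b ↔ ∀ a ∈ U, W a b ≠ 1 → sLE (Wsets W B {a}) (Wsets W {a} B) := by
  rw [wDefendsIn, insert_eq_of_mem hb]

theorem wDefendsIn.eq_one_of_unattacked (habs : IsAbsorptive S) {U B : Finset A} {a b : A}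
    (hdef : wDefendsIn W U B b) (hb : b ∈ B) (ha : a ∈ U) (hBa : ∀ x ∈ B, W x a = 1) :
    W a b = 1 := by
  by_contra hab
  have h := (wDefendsIn_iff_of_mem hb).1 hdef a ha hab
  rw [(Wsets_eq_one_iff habs).2 fun x hx d hd => mem_singleton.1 hd ▸ hBa x hx] at h
  have haB := (Wsets_eq_one_iff habs).1 (sLE_antisymm_s12 (habs.sLE_one _) h)
  exact hab (haB a (mem_singleton_self a) b hb)

theorem wDefendsIn_union_of_mem_left (habs : IsAbsorptive S) {U Z T : Finset A} {b : A}
    (hbZ : b ∈ Z) (hZ : wDefendsIn W U Z b) (hT : ∀ t ∈ T, wDefendsIn W U (Z ∪ T) t) :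
    wDefendsIn W U (Z ∪ T) b := by
  rw [wDefendsIn_iff_of_mem (mem_union_left T hbZ)]
  intro a ha hab
  by_cases haT : ∃ t ∈ T, W a t ≠ 1
  · obtain ⟨t, ht, hat⟩ := haT
    exact (wDefendsIn_iff_of_mem (mem_union_right Z ht)).1 (hT t ht) a ha hat
  · push Not at haT
    have hZT : Wsets W {a} (Z ∪ T) = Wsets W {a} Z := by
      rw [union_comm, Wsets_union_right_of_forall_eq_one]
      simpa using haT
    rw [hZT]
    exact sLE_trans (Wsets_sLE_of_subset_left habs subset_union_left)
      ((wDefendsIn_iff_of_mem hbZ).1 hZ a ha hab)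

theorem wAdmissibleIn.of_union (habs : IsAbsorptive S) {U V Z C : Finset A}
    (hVU : V ⊆ U) (hCV : C ⊆ V) (hZV : ∀ z ∈ Z, ∀ v ∈ V, W z v = 1)
    (h : wAdmissibleIn W U (Z ∪ C)) : wAdmissibleIn W V C := by
  obtain ⟨-, hcf, hdef⟩ := h
  refine ⟨hCV, ?_, fun x hx a ha hax => ?_⟩
  · rw [wConflictFree_iff_s12 habs] at hcf ⊢
    exact fun x hx y hy => hcf x (mem_union_right Z hx) y (mem_union_right Z hy)
  · have hxZC := mem_union_right Z hx
    have hd := (wDefendsIn_iff_of_mem hxZC).1 (hdef x hxZC) a (hVU ha) hax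
    rw [Wsets_union_left_of_forall_eq_one fun z hz d hd => mem_singleton.1 hd ▸ hZV z hz a ha]
      at hd
    rw [insert_eq_of_mem hx]
    exact sLE_trans hd (Wsets_sLE_of_subset_right habs subset_union_right)

end Weights

theorem union_complete_general (W : A → A → S)
    (habs : ∀ s t : S, s + s * t = s)
    (Z : Finset A) (hZ : wAdmissibleIn W Finset.univ Z)
    (B : Finset A) (hB : ∀ a : A, a ∈ B ↔ a ∉ Z ∧ ∀ i ∈ Z, W i a = 1)
    (T : Finset A) (hT : T ⊆ B)
    (hTB : wCompleteIn W B T)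
    (hdef : ∀ t ∈ T, wDefendsIn W Finset.univ (Z ∪ T) t) :
    wCompleteIn W Finset.univ (Z ∪ T) := by
  obtain ⟨-, hZcf, hZdef⟩ := hZ
  obtain ⟨⟨-, hTcf, -⟩, hTmax⟩ := hTB
  have hZB : ∀ z ∈ Z, ∀ a ∈ B, W z a = 1 := fun z hz a ha => ((hB a).1 ha).2 z hz
  have hTZ : ∀ t ∈ T, ∀ z ∈ Z, W t z = 1 := fun t ht z hz =>
    (hZdef z hz).eq_one_of_unattacked habs hz (mem_univ t) fun z' hz' => hZB z' hz' t (hT ht)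
  refine ⟨⟨subset_univ _, wConflictFree_union habs hZcf hTcf
    (fun z hz t ht => hZB z hz t (hT ht)) hTZ, fun b hb => ?_⟩, fun b _ hadm => ?_⟩
  · rcases mem_union.1 hb with hbZ | hbT
    exacts [wDefendsIn_union_of_mem_left habs hbZ (hZdef b hbZ) hdef, hdef b hbT]
  · by_contra hbZT
    have hbB : b ∈ B := (hB b).2 ⟨fun hbZ => hbZT (mem_union_left T hbZ), fun z hz =>
      (wConflictFree_iff_s12 habs).1 hadm.2.1 z (mem_insert_of_mem (mem_union_left T hz)) b
        (mem_insert_self b _)⟩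
    rw [← union_insert] at hadm
    exact hbZT (mem_union_right Z (hTmax b hbB
      (hadm.of_union habs (subset_univ B) (insert_subset hbB hT) hZB)))

/-- Division/union theorem: if Z is w-admissible in F, B = A \ (Z ∪ R⁺(Z)) is the
remaining sub-framework's argument set, T ⊆ B is a w-complete extension of F|_B, and
every argument of T is w-defended by Z ∪ T in F, then Z ∪ T is a w-complete extension
of F.  (Here a ∈ B iff a ∉ Z and no member of Z attacks a, i.e. W(i,a) = ⊤ for
all i ∈ Z.) -/
theorem union_complete (W : A → A → S)
    (hadd : ∀ s : S, s + s = s) (habs : ∀ s t : S, s + s * t = s)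
    (Z : Finset A) (hZ : wAdmissibleIn W Finset.univ Z)
    (B : Finset A) (hB : ∀ a : A, a ∈ B ↔ a ∉ Z ∧ ∀ i ∈ Z, W i a = 1)
    (T : Finset A) (hT : T ⊆ B)
    (hTB : wCompleteIn W B T)
    (hdef : ∀ t ∈ T, wDefendsIn W Finset.univ (Z ∪ T) t) :
    wCompleteIn W Finset.univ (Z ∪ T) :=
  union_complete_general W habs Z hZ B hB T hT hTB hdef
end
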